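/- For every integer d ≥ 0, the minimum of ∫ p(x)² dγ(x) over all real polynomials p of degree at most d with p(0) = 1 equals (∑_{i=0}^d He_i(0)²/i!)^{-1}, where γ is the standard Gaussian measure N(0,1) on ℝ and He_i is the i-th probabilists' Hermite polynomial. That is, every such p satisfies ∫ p² dγ ≥ (∑_{i=0}^d He_i(0)²/i!)^{-1}, and some polynomial of degree at most d with p(0) = 1 attains this value. -/

import Mathlib

/-!
Write `p = ∑ cᵢ Heᵢ` in the Hermite basis. Gaussian integration by parts says that `X - d/dx`
is the adjoint of `d/dx` in `L²(γ)`; since `Heᵢ₊₁ = (X - d/dx) Heᵢ` and `Heᵢ₊₁' = (i + 1) Heᵢ`,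
this makes the `Heᵢ` orthogonal with `‖Heᵢ‖² = i!`. Hence `∫ p² dγ = ∑ cᵢ² i!` subject to the
linear constraint `p(0) = ∑ cᵢ Heᵢ(0) = 1`, and Cauchy–Schwarz gives the minimum
`(∑ Heᵢ(0)² / i!)⁻¹`, attained at `cᵢ ∝ Heᵢ(0) / i!`.
-/

open MeasureTheory ProbabilityTheory Polynomial Finset
open scoped Nat NNReal

namespace Polynomial

lemma exists_eq_sum_C_mul_of_monic {R : Type*} [CommRing R] {q : ℕ → R[X]}
    (hmonic : ∀ i, (q i).Monic) (hdeg : ∀ i, (q i).natDegree = i) {d : ℕ} {p : R[X]}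
    (hp : p.natDegree ≤ d) : ∃ c : ℕ → R, p = ∑ i ∈ range (d + 1), C (c i) * q i := by
  induction d generalizing p with
  | zero =>
    refine ⟨fun _ => p.coeff 0, ?_⟩
    rw [sum_range_one, (hmonic 0).natDegree_eq_zero.1 (hdeg 0), mul_one]
    exact eq_C_of_natDegree_le_zero hp
  | succ d ih =>
    set a := p.coeff (d + 1)
    have hr : (p - C a * q (d + 1)).natDegree ≤ d := by
      refine natDegree_le_iff_coeff_eq_zero.2 fun N hN => ?_
      rw [coeff_sub, coeff_C_mul]
      rcases (Nat.succ_le_of_lt hN).eq_or_lt with rfl | hlt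
      · have hlead : (q (d + 1)).coeff (d + 1) = 1 := by
          simpa only [hdeg] using (hmonic (d + 1)).coeff_natDegree
        rw [hlead, mul_one, sub_self]
      · rw [coeff_eq_zero_of_natDegree_lt (hp.trans_lt hlt),
          coeff_eq_zero_of_natDegree_lt ((hdeg _).trans_lt hlt), mul_zero, sub_zero]
    obtain ⟨c, hc⟩ := ih hr
    refine ⟨Function.update c (d + 1) a, ?_⟩
    rw [sum_range_succ, Function.update_self, ← sub_eq_iff_eq_add, hc]
    exact sum_congr rfl fun i hi => by rw [Function.update_of_ne (by simp at hi; omega)]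

lemma derivative_hermite_succ (n : ℕ) :
    derivative (hermite (n + 1)) = (n + 1 : ℤ[X]) * hermite n := by
  induction n with
  | zero => simp
  | succ n ih =>
    rw [hermite_succ (n + 1), derivative_sub, derivative_mul, derivative_X, one_mul, ih,
      derivative_mul, hermite_succ n]
    push_cast
    simp only [derivative_add, derivative_natCast, derivative_one]
    ring

noncomputable def hermiteReal (n : ℕ) : ℝ[X] := (hermite n).map (Int.castRingHom ℝ)

@[simp]
lemma hermiteReal_zero : hermiteReal 0 = 1 := by simp [hermiteReal]

lemma hermiteReal_succ (n : ℕ) :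
    hermiteReal (n + 1) = X * hermiteReal n - derivative (hermiteReal n) := by
  simp [hermiteReal, derivative_map]

lemma derivative_hermiteReal_succ (n : ℕ) :
    derivative (hermiteReal (n + 1)) = (n + 1 : ℝ[X]) * hermiteReal n := by
  rw [hermiteReal, derivative_map, derivative_hermite_succ, Polynomial.map_mul]
  simp [hermiteReal]

lemma monic_hermiteReal (n : ℕ) : (hermiteReal n).Monic := (hermite_monic n).map _

lemma natDegree_hermiteReal (n : ℕ) : (hermiteReal n).natDegree = n := by
  rw [hermiteReal, natDegree_map_eq_of_injective Int.cast_injective, natDegree_hermite]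

lemma eval_zero_hermiteReal (n : ℕ) :
    (hermiteReal n).eval 0 = (((hermite n).eval 0 : ℤ) : ℝ) := by
  simp [hermiteReal, eval_map, ← coeff_zero_eq_eval_zero]

end Polynomial

namespace ProbabilityTheory

variable {μ : ℝ} {v : ℝ≥0}

lemma integrable_eval_gaussianReal (p : ℝ[X]) :
    Integrable (fun x => p.eval x) (gaussianReal μ v) := by
  induction p using Polynomial.induction_on' with
  | add p q hp hq => simpa only [eval_add] using hp.fun_add hq
  | monomial n a =>
    have hpow : Integrable (fun x : ℝ => x ^ n) (gaussianReal μ v) :=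
      (integrable_norm_iff (by fun_prop)).1 <| by
        simpa only [norm_pow, id] using
          (memLp_id_gaussianReal (μ := μ) (v := v) n).integrable_norm_pow'
    simpa only [eval_monomial] using hpow.const_mul a

lemma integrable_gaussianPDFReal_mul {f : ℝ → ℝ} (hv : v ≠ 0)
    (hf : Integrable f (gaussianReal μ v)) :
    Integrable (fun x => gaussianPDFReal μ v x * f x) := by
  rw [gaussianReal_of_var_ne_zero _ hv, integrable_withDensity_iff_integrable_smul'
    (measurable_gaussianPDF μ v) (ae_of_all _ fun _ => gaussianPDF_lt_top)] at hf
  simpa only [toReal_gaussianPDF, smul_eq_mul] using hf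

lemma hasDerivAt_gaussianPDFReal (x : ℝ) :
    HasDerivAt (gaussianPDFReal μ v) (-((x - μ) / v) * gaussianPDFReal μ v x) x := by
  have h : HasDerivAt (fun y => -(y - μ) ^ 2 / (2 * v)) (-((x - μ) / v)) x :=
    (((hasDerivAt_id' x).sub_const μ).pow 2).neg.div_const (2 * (v : ℝ)) |>.congr_deriv (by ring)
  exact (h.exp.const_mul (√(2 * Real.pi * v))⁻¹).congr_deriv (by rw [gaussianPDFReal]; ring)

lemma integral_eval_sub_derivative_gaussianReal (p : ℝ[X]) :
    ∫ x, ((X - C μ) * p - C (v : ℝ) * derivative p).eval x ∂gaussianReal μ v = 0 := by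
  rcases eq_or_ne v 0 with rfl | hv
  · simp [gaussianReal_zero_var]
  set q := derivative p - C (v : ℝ)⁻¹ * ((X - C μ) * p)
  have hderiv : ∀ x, HasDerivAt (fun y => gaussianPDFReal μ v y * p.eval y)
      (gaussianPDFReal μ v x * q.eval x) x := fun x => by
    refine ((hasDerivAt_gaussianPDFReal x).mul (p.hasDerivAt x)).congr_deriv ?_
    simp only [q, eval_sub, eval_mul, eval_C, eval_X]
    ring
  calc ∫ x, ((X - C μ) * p - C (v : ℝ) * derivative p).eval x ∂gaussianReal μ v
      = ∫ x, -v * (gaussianPDFReal μ v x * q.eval x) := by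
        rw [integral_gaussianReal_eq_integral_smul hv]
        congr 1 with x
        simp only [q, eval_sub, eval_mul, eval_C, eval_X, smul_eq_mul]
        field_simp
        ring
    _ = 0 := by
        rw [integral_const_mul, integral_eq_zero_of_hasDerivAt_of_integrable hderiv
          (integrable_gaussianPDFReal_mul hv (integrable_eval_gaussianReal q))
          (integrable_gaussianPDFReal_mul hv (integrable_eval_gaussianReal p)), mul_zero]

end ProbabilityTheory

lemma integral_eval_mul_X_mul_sub_derivative (q r : ℝ[X]) :
    ∫ x, (q * (X * r - derivative r)).eval x ∂gaussianReal 0 1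
      = ∫ x, (derivative q * r).eval x ∂gaussianReal 0 1 := by
  have h := integral_eval_sub_derivative_gaussianReal (μ := 0) (v := 1) (q * r)
  rw [show (X - C 0) * (q * r) - C ((1 : ℝ≥0) : ℝ) * derivative (q * r)
      = q * (X * r - derivative r) - derivative q * r by simp; ring] at h
  simp only [eval_sub] at h
  rwa [integral_sub (integrable_eval_gaussianReal _) (integrable_eval_gaussianReal _),
    sub_eq_zero] at h

lemma integral_eval_hermiteReal_mul (m n : ℕ) :
    ∫ x, (hermiteReal m * hermiteReal n).eval x ∂gaussianReal 0 1
      = if m = n then (m ! : ℝ) else 0 := by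
  induction n generalizing m with
  | zero =>
    cases m with
    | zero => simp
    | succ k =>
      simpa [hermiteReal_succ] using integral_eval_mul_X_mul_sub_derivative 1 (hermiteReal k)
  | succ n ih =>
    rw [hermiteReal_succ, integral_eval_mul_X_mul_sub_derivative]
    cases m with
    | zero => simp
    | succ k =>
      have hscale (x : ℝ) : ((k + 1 : ℝ[X]) * hermiteReal k * hermiteReal n).eval x
          = (k + 1) * (hermiteReal k * hermiteReal n).eval x := by
        rw [mul_assoc, eval_mul]
        simp
      simp_rw [derivative_hermiteReal_succ, hscale, integral_const_mul, ih, Nat.factorial_succ]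
      by_cases hkn : k = n <;> simp [hkn]

lemma integral_eval_sum_C_mul_hermiteReal_sq (s : Finset ℕ) (c : ℕ → ℝ) :
    ∫ x, ((∑ i ∈ s, C (c i) * hermiteReal i).eval x) ^ 2 ∂gaussianReal 0 1
      = ∑ i ∈ s, c i ^ 2 * i ! := by
  have hexpand (x : ℝ) : ((∑ i ∈ s, C (c i) * hermiteReal i).eval x) ^ 2
      = ∑ i ∈ s, ∑ j ∈ s, c i * c j * (hermiteReal i * hermiteReal j).eval x := by
    simp only [sq, eval_finsetSum, eval_mul, eval_C, sum_mul_sum]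
    exact sum_congr rfl fun i _ => sum_congr rfl fun j _ => by ring
  have hint (i j : ℕ) : Integrable (fun x => c i * c j * (hermiteReal i * hermiteReal j).eval x)
      (gaussianReal 0 1) := (integrable_eval_gaussianReal _).const_mul _
  simp_rw [hexpand]
  rw [integral_finsetSum _ fun i _ => integrable_finsetSum _ fun j _ => hint i j]
  refine sum_congr rfl fun i hi => ?_
  simp_rw [integral_finsetSum _ fun j _ => hint i j, integral_const_mul,
    integral_eval_hermiteReal_mul, mul_ite, mul_zero, sum_ite_eq, if_pos hi]
  ring

section CauchySchwarz

variable {ι : Type*} {s : Finset ι} {w h : ι → ℝ}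

lemma inv_sum_sq_div_le_sum_sq_mul {c : ι → ℝ} (hw : ∀ i ∈ s, 0 < w i)
    (hc : ∑ i ∈ s, c i * h i = 1) :
    (∑ i ∈ s, h i ^ 2 / w i)⁻¹ ≤ ∑ i ∈ s, c i ^ 2 * w i := by
  have hcs : (∑ i ∈ s, c i * h i) ^ 2 ≤ (∑ i ∈ s, c i ^ 2 * w i) * ∑ i ∈ s, h i ^ 2 / w i :=
    sum_sq_le_sum_mul_sum_of_sq_le_mul s (fun i hi => by have := hw i hi; positivity)
      (fun i hi => by have := hw i hi; positivity)
      fun i hi => le_of_eq <| by have := (hw i hi).ne'; field_simp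
  rw [hc, one_pow] at hcs
  have hS : 0 < ∑ i ∈ s, h i ^ 2 / w i := by
    refine (sum_nonneg fun i hi => by have := hw i hi; positivity).lt_of_ne fun h0 => ?_
    rw [← h0, mul_zero] at hcs
    exact one_ne_zero (le_antisymm hcs zero_le_one)
  exact (inv_le_iff_one_le_mul₀ hS).2 hcs

lemma exists_sum_mul_eq_one_and_sum_sq_mul_eq_inv (hw : ∀ i ∈ s, w i ≠ 0)
    (hS : ∑ i ∈ s, h i ^ 2 / w i ≠ 0) :
    ∃ c : ι → ℝ, ∑ i ∈ s, c i * h i = 1 ∧ ∑ i ∈ s, c i ^ 2 * w i = (∑ i ∈ s, h i ^ 2 / w i)⁻¹ := by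
  set S := ∑ i ∈ s, h i ^ 2 / w i
  refine ⟨fun i => h i / w i / S, ?_, ?_⟩
  · calc ∑ i ∈ s, h i / w i / S * h i = (∑ i ∈ s, h i ^ 2 / w i) / S := by
          rw [sum_div]
          exact sum_congr rfl fun i _ => by ring
      _ = 1 := div_self hS
  · calc ∑ i ∈ s, (h i / w i / S) ^ 2 * w i = (∑ i ∈ s, h i ^ 2 / w i) / S ^ 2 := by
          rw [sum_div]
          exact sum_congr rfl fun i hi => by have := hw i hi; field_simp
      _ = S⁻¹ := by rw [sq, ← div_div, div_self hS, one_div]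

end CauchySchwarz

theorem stmt_11 (d : ℕ) :
    (∀ p : Polynomial ℝ, p.natDegree ≤ d → p.eval 0 = 1 →
      (∑ i ∈ Finset.range (d + 1),
          (((Polynomial.hermite i).eval 0 : ℤ) : ℝ) ^ 2 / (Nat.factorial i : ℝ))⁻¹
        ≤ ∫ x, (p.eval x) ^ 2 ∂(gaussianReal 0 1)) ∧
    (∃ p : Polynomial ℝ, p.natDegree ≤ d ∧ p.eval 0 = 1 ∧
      ∫ x, (p.eval x) ^ 2 ∂(gaussianReal 0 1) =
        (∑ i ∈ Finset.range (d + 1),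
          (((Polynomial.hermite i).eval 0 : ℤ) : ℝ) ^ 2 / (Nat.factorial i : ℝ))⁻¹) := by
  have hfact (i : ℕ) : (0 : ℝ) < i ! := mod_cast i.factorial_pos
  have eval_zero_sum (c : ℕ → ℝ) : (∑ i ∈ range (d + 1), C (c i) * hermiteReal i).eval 0
      = ∑ i ∈ range (d + 1), c i * (((hermite i).eval 0 : ℤ) : ℝ) := by
    simp [eval_finsetSum, eval_zero_hermiteReal]
  constructor
  · intro p hp hp0
    obtain ⟨c, rfl⟩ := exists_eq_sum_C_mul_of_monic monic_hermiteReal natDegree_hermiteReal hp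
    rw [integral_eval_sum_C_mul_hermiteReal_sq]
    exact inv_sum_sq_div_le_sum_sq_mul (fun i _ => hfact i) (by rw [← eval_zero_sum, hp0])
  · have hS : 0 < ∑ i ∈ range (d + 1), (((hermite i).eval 0 : ℤ) : ℝ) ^ 2 / (i ! : ℝ) :=
      sum_pos' (fun i _ => by have := hfact i; positivity) ⟨0, by simp⟩
    obtain ⟨c, hc1, hc2⟩ :=
      exists_sum_mul_eq_one_and_sum_sq_mul_eq_inv (fun i _ => (hfact i).ne') hS.ne'
    refine ⟨∑ i ∈ range (d + 1), C (c i) * hermiteReal i, ?_, by rw [eval_zero_sum, hc1],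
      by rw [integral_eval_sum_C_mul_hermiteReal_sq, hc2]⟩
    refine natDegree_sum_le_of_forall_le _ _ fun i hi => ?_
    exact (natDegree_C_mul_le _ _).trans
      ((natDegree_hermiteReal i).trans_le (Nat.lt_succ_iff.1 (mem_range.1 hi)))
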